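/- Let d ≥ 1 and β > 0. There is a constant C = C(d) such that for all reals L ≥ 1 and R > 0: Σ_{n, n' ∈ ℤ^d, |n|_∞ ≥ L, |n'|_∞ ≥ L, |n−n'|_∞ ≥ L/R} |n|^{−2d} |n'|^{−2d} (1+|n−n'|)^{−β} ≤ C R^{β} L^{−2d−β}. -/
import Mathlib


/-- Euclidean norm of a lattice point of `ℤ^d`. -/
noncomputable def zEucNorm {d : ℕ} (n : Fin d → ℤ) : ℝ :=
  Real.sqrt (∑ i, ((n i : ℝ)) ^ 2)

/-- ℓ∞ norm of a lattice point of `ℤ^d`. -/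
noncomputable def zSupNorm {d : ℕ} (n : Fin d → ℤ) : ℝ :=
  ((Finset.univ.sup fun i => (n i).natAbs : ℕ) : ℝ)

lemma zEucNorm_nonneg {d : ℕ} (n : Fin d → ℤ) : 0 ≤ zEucNorm n :=
  Real.sqrt_nonneg _

lemma zSupNorm_le_zEucNorm {d : ℕ} (hd : 1 ≤ d) (n : Fin d → ℤ) :
    zSupNorm n ≤ zEucNorm n := by
  have hne : (Finset.univ : Finset (Fin d)).Nonempty := by
    haveI : NeZero d := ⟨by omega⟩
    exact Finset.univ_nonempty
  obtain ⟨i, -, hi⟩ := Finset.exists_mem_eq_sup Finset.univ hne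
    (fun i => (n i).natAbs)
  have h1 : zSupNorm n = |((n i : ℝ))| := by
    rw [zSupNorm, hi]
    rw [Nat.cast_natAbs]
    norm_num
  rw [h1, zEucNorm, ← Real.sqrt_sq_eq_abs]
  apply Real.sqrt_le_sqrt
  exact Finset.single_le_sum (fun j _ => sq_nonneg ((n j : ℝ))) (Finset.mem_univ i)

lemma abs_coord_le_zSupNorm {d : ℕ} (n : Fin d → ℤ) (i : Fin d) :
    |((n i : ℝ))| ≤ zSupNorm n := by
  have h1 : |((n i : ℝ))| = (((n i).natAbs : ℕ) : ℝ) := by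
    rw [Nat.cast_natAbs]
    norm_num
  rw [h1, zSupNorm]
  exact Nat.cast_le.mpr (Finset.le_sup (f := fun i => (n i).natAbs) (Finset.mem_univ i))

/-- telescoping bound on ℕ -/
lemma sum_range_inv_sq_le (L : ℝ) (hL : 1 ≤ L) (N : ℕ) :
    ∑ m ∈ Finset.range N, ((L + (m : ℝ)) ^ 2)⁻¹ ≤ 2 / L := by
  have hL0 : (0 : ℝ) < L := lt_of_lt_of_le one_pos hL
  set t : ℕ → ℝ := fun m => (L + (m : ℝ) - 1/2)⁻¹ with ht
  have hpos : ∀ m : ℕ, (0 : ℝ) < L + (m : ℝ) - 1/2 := by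
    intro m
    have : (0 : ℝ) ≤ (m : ℝ) := Nat.cast_nonneg m
    linarith
  have key : ∀ m : ℕ, ((L + (m : ℝ)) ^ 2)⁻¹ ≤ t m - t (m + 1) := by
    intro m
    have h1 : (0 : ℝ) < L + (m : ℝ) - 1/2 := hpos m
    have h2 : (0 : ℝ) < L + ((m : ℝ) + 1) - 1/2 := by linarith
    have heq : t m - t (m + 1) =
        ((L + (m : ℝ) - 1/2) * (L + ((m : ℝ) + 1) - 1/2))⁻¹ := by
      rw [ht]
      push_cast
      rw [inv_sub_inv h1.ne' h2.ne']
      rw [show (L + ((m : ℝ) + 1) - 1/2) - (L + (m : ℝ) - 1/2) = 1 by ring, one_div]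
    rw [heq]
    apply inv_anti₀
    · positivity
    · nlinarith
  calc ∑ m ∈ Finset.range N, ((L + (m : ℝ)) ^ 2)⁻¹
      ≤ ∑ m ∈ Finset.range N, (t m - t (m + 1)) :=
        Finset.sum_le_sum fun m _ => key m
    _ = t 0 - t N := Finset.sum_range_sub' t N
    _ ≤ t 0 := by
        have h1 := (hpos N)
        have h2 : 0 < t N := inv_pos.mpr h1
        linarith
    _ ≤ 2 / L := by
        have h3 : t 0 = (L - 1/2)⁻¹ := by rw [ht]; norm_num
        rw [h3, ← inv_div L 2]
        exact inv_anti₀ (by linarith) (by linarith)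

lemma sum_nat_inv_sq_le (L : ℝ) (hL : 1 ≤ L) (v : Finset ℕ) :
    ∑ m ∈ v, ((L + (m : ℝ)) ^ 2)⁻¹ ≤ 2 / L := by
  refine le_trans (Finset.sum_le_sum_of_subset_of_nonneg
    (fun m hm => Finset.mem_range.mpr ?_) (fun m _ _ => by positivity))
    (sum_range_inv_sq_le L hL (v.sup id + 1))
  exact Nat.lt_succ_of_le (Finset.le_sup (f := id) hm)

/-- one-dimensional estimate over ℤ -/
lemma sum_int_inv_sq_le (L : ℝ) (hL : 1 ≤ L) (u : Finset ℤ) :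
    ∑ k ∈ u, ((L + |(k : ℝ)|) ^ 2)⁻¹ ≤ 4 / L := by
  have hsplit := Finset.sum_filter_add_sum_filter_not u (fun k => 0 ≤ k)
    (fun k => ((L + |(k : ℝ)|) ^ 2)⁻¹)
  have h1 : ∑ k ∈ u.filter (fun k => 0 ≤ k), ((L + |(k : ℝ)|) ^ 2)⁻¹ ≤ 2 / L := by
    have heq : ∑ m ∈ (((u.filter (fun k => 0 ≤ k)).image Int.toNat : Finset ℕ)),
        ((L + (m : ℝ)) ^ 2)⁻¹ =
        ∑ k ∈ u.filter (fun k => 0 ≤ k), ((L + |(k : ℝ)|) ^ 2)⁻¹ := by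
      rw [Finset.sum_image]
      · apply Finset.sum_congr rfl
        intro k hk
        have hk0 : (0 : ℤ) ≤ k := (Finset.mem_filter.mp hk).2
        have hcast : ((k.toNat : ℕ) : ℝ) = (k : ℝ) := by
          exact_mod_cast congrArg (Int.cast : ℤ → ℝ) (Int.toNat_of_nonneg hk0)
        rw [hcast, abs_of_nonneg (by exact_mod_cast hk0)]
      · intro a ha b hb hab
        have ha0 : (0 : ℤ) ≤ a := (Finset.mem_filter.mp ha).2
        have hb0 : (0 : ℤ) ≤ b := (Finset.mem_filter.mp hb).2
        omega
    rw [← heq]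
    exact sum_nat_inv_sq_le L hL _
  have h2 : ∑ k ∈ u.filter (fun k => ¬ 0 ≤ k), ((L + |(k : ℝ)|) ^ 2)⁻¹ ≤ 2 / L := by
    have heq : ∑ m ∈ (((u.filter (fun k => ¬ 0 ≤ k)).image
          (fun k => (-k).toNat) : Finset ℕ)),
        ((L + (m : ℝ)) ^ 2)⁻¹ =
        ∑ k ∈ u.filter (fun k => ¬ 0 ≤ k), ((L + |(k : ℝ)|) ^ 2)⁻¹ := by
      rw [Finset.sum_image]
      · apply Finset.sum_congr rfl
        intro k hk
        have hk0 : (0 : ℤ) ≤ -k := by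
          have := (Finset.mem_filter.mp hk).2
          omega
        have hcast : (((-k).toNat : ℕ) : ℝ) = ((-k : ℤ) : ℝ) := by
          exact_mod_cast congrArg (Int.cast : ℤ → ℝ) (Int.toNat_of_nonneg hk0)
        have hcast2 : ((-k : ℤ) : ℝ) = -(k : ℝ) := by push_cast; ring
        rw [hcast, hcast2, abs_of_nonpos (by
          have hk1 : k ≤ 0 := by
            have := (Finset.mem_filter.mp hk).2
            omega
          exact_mod_cast hk1)]
      · intro a ha b hb hab
        have hab' : (-a).toNat = (-b).toNat := hab
        have ha0 : ¬ (0:ℤ) ≤ a := by simpa using (Finset.mem_filter.mp ha).2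
        have hb0 : ¬ (0:ℤ) ≤ b := by simpa using (Finset.mem_filter.mp hb).2
        omega
    rw [← heq]
    exact sum_nat_inv_sq_le L hL _
  have hL0 : (0 : ℝ) < L := lt_of_lt_of_le one_pos hL
  have h4 : (4 : ℝ) / L = 2 / L + 2 / L := by ring
  rw [h4, ← hsplit]
  exact add_le_add h1 h2

/-- pointwise bound by a product -/
lemma pointwise_prod_bound {d : ℕ} (hd : 1 ≤ d) (L : ℝ) (hL : 1 ≤ L)
    (n : Fin d → ℤ) (hn : L ≤ zSupNorm n) :
    zEucNorm n ^ (-(2 * (d : ℝ))) ≤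
      (4 : ℝ) ^ d * ∏ i, ((L + |((n i : ℝ))|) ^ 2)⁻¹ := by
  have hsup_pos : 0 < zSupNorm n := lt_of_lt_of_le (lt_of_lt_of_le one_pos hL) hn
  have heuc : zSupNorm n ≤ zEucNorm n := zSupNorm_le_zEucNorm hd n
  have heuc_pos : 0 < zEucNorm n := lt_of_lt_of_le hsup_pos heuc
  have h4 : (0:ℝ) < (4:ℝ) ^ d := by positivity
  -- convert rpow to nat pow
  have hcast : zEucNorm n ^ (-(2 * (d : ℝ))) = (zEucNorm n ^ (2 * d : ℕ))⁻¹ := by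
    rw [← Real.rpow_natCast (zEucNorm n) (2 * d), ← Real.rpow_neg heuc_pos.le]
    congr 1
    push_cast
    ring
  rw [hcast]
  have step2 : (zEucNorm n ^ (2 * d : ℕ))⁻¹ ≤ (zSupNorm n ^ (2 * d : ℕ))⁻¹ := by
    apply inv_anti₀ (pow_pos hsup_pos _)
    exact pow_le_pow_left₀ hsup_pos.le heuc _
  refine le_trans step2 ?_
  -- product bound
  have hprod : ∏ i, (L + |((n i : ℝ))|) ^ 2 ≤ (4 : ℝ) ^ d * zSupNorm n ^ (2 * d : ℕ) := by
    have hpt : ∀ i : Fin d, (L + |((n i : ℝ))|) ^ 2 ≤ 4 * zSupNorm n ^ 2 := by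
      intro i
      have h1 : |((n i : ℝ))| ≤ zSupNorm n := abs_coord_le_zSupNorm n i
      have h2 : L + |((n i : ℝ))| ≤ 2 * zSupNorm n := by linarith [hn]
      nlinarith [abs_nonneg ((n i : ℝ)), hsup_pos]
    calc ∏ i, (L + |((n i : ℝ))|) ^ 2
        ≤ ∏ _i : Fin d, 4 * zSupNorm n ^ 2 :=
          Finset.prod_le_prod (fun i _ => by positivity) (fun i _ => hpt i)
      _ = (4 * zSupNorm n ^ 2) ^ d := by rw [Finset.prod_const, Finset.card_univ,
          Fintype.card_fin]
      _ = (4 : ℝ) ^ d * zSupNorm n ^ (2 * d : ℕ) := by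
          rw [mul_pow, ← pow_mul]
  have hprod_pos : 0 < ∏ i, (L + |((n i : ℝ))|) ^ 2 := by
    apply Finset.prod_pos
    intro i _
    have := abs_nonneg ((n i : ℝ))
    nlinarith
  rw [Finset.prod_inv_distrib]
  calc (zSupNorm n ^ (2 * d : ℕ))⁻¹
      = (4:ℝ) ^ d * ((4:ℝ) ^ d * zSupNorm n ^ (2 * d : ℕ))⁻¹ := by
        rw [mul_inv, ← mul_assoc, mul_inv_cancel₀ (ne_of_gt h4), one_mul]
    _ ≤ (4:ℝ) ^ d * (∏ i, (L + |((n i : ℝ))|) ^ 2)⁻¹ :=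
        mul_le_mul_of_nonneg_left (inv_anti₀ hprod_pos hprod) h4.le

/-- d-dimensional finite-sum estimate -/
lemma sum_finset_le {d : ℕ} (hd : 1 ≤ d) (L : ℝ) (hL : 1 ≤ L)
    (t : Finset (Fin d → ℤ)) (ht : ∀ n ∈ t, L ≤ zSupNorm n) :
    ∑ n ∈ t, zEucNorm n ^ (-(2 * (d : ℝ))) ≤ (16 : ℝ) ^ d * L ^ (-(d : ℝ)) := by
  have hL0 : (0 : ℝ) < L := lt_of_lt_of_le one_pos hL
  have step1 : ∑ n ∈ t, zEucNorm n ^ (-(2 * (d : ℝ))) ≤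
      (4 : ℝ) ^ d * ∑ n ∈ t, ∏ i, ((L + |((n i : ℝ))|) ^ 2)⁻¹ := by
    rw [Finset.mul_sum]
    exact Finset.sum_le_sum fun n hn => pointwise_prod_bound hd L hL n (ht n hn)
  have step2 : ∑ n ∈ t, ∏ i, ((L + |((n i : ℝ))|) ^ 2)⁻¹ ≤
      ∑ p ∈ Fintype.piFinset (fun i => (t.image (fun n => n i) : Finset ℤ)),
        ∏ i, ((L + |((p i : ℝ))|) ^ 2)⁻¹ := by
    apply Finset.sum_le_sum_of_subset_of_nonneg
    · intro n hn
      rw [Fintype.mem_piFinset]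
      intro i
      exact Finset.mem_image_of_mem _ hn
    · intro n _ _
      positivity
  have step3 : ∑ p ∈ Fintype.piFinset (fun i => (t.image (fun n => n i) : Finset ℤ)),
        ∏ i, ((L + |((p i : ℝ))|) ^ 2)⁻¹ =
      ∏ i : Fin d, ∑ k ∈ (t.image (fun n => n i) : Finset ℤ), ((L + |(k : ℝ)|) ^ 2)⁻¹ :=
    (Finset.prod_univ_sum (fun i => (t.image (fun n => n i) : Finset ℤ))
      (fun _ k => ((L + |(k : ℝ)|) ^ 2)⁻¹)).symm
  have step4 : ∏ i : Fin d, ∑ k ∈ (t.image (fun n => n i) : Finset ℤ), ((L + |(k : ℝ)|) ^ 2)⁻¹ ≤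
      (4 / L) ^ d := by
    calc ∏ i : Fin d, ∑ k ∈ (t.image (fun n => n i) : Finset ℤ), ((L + |(k : ℝ)|) ^ 2)⁻¹
        ≤ ∏ _i : Fin d, (4 / L) := by
          apply Finset.prod_le_prod
          · intro i _
            apply Finset.sum_nonneg
            intro k _
            positivity
          · intro i _
            exact sum_int_inv_sq_le L hL _
      _ = (4 / L) ^ d := by rw [Finset.prod_const, Finset.card_univ, Fintype.card_fin]
  have hfinal : (4 : ℝ) ^ d * (4 / L) ^ d = (16 : ℝ) ^ d * L ^ (-(d : ℝ)) := by
    have h1 : L ^ (-(d : ℝ)) = (L ^ (d : ℕ))⁻¹ := by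
      rw [Real.rpow_neg hL0.le, Real.rpow_natCast]
    rw [h1, ← mul_pow, show (4:ℝ) * (4 / L) = 16 / L by ring, div_pow, div_eq_mul_inv]
  calc ∑ n ∈ t, zEucNorm n ^ (-(2 * (d : ℝ)))
      ≤ (4 : ℝ) ^ d * ∑ n ∈ t, ∏ i, ((L + |((n i : ℝ))|) ^ 2)⁻¹ := step1
    _ ≤ (4 : ℝ) ^ d * (4 / L) ^ d := by
        apply mul_le_mul_of_nonneg_left _ (by positivity)
        rw [← step3] at step4
        exact le_trans step2 step4
    _ = (16 : ℝ) ^ d * L ^ (-(d : ℝ)) := hfinal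

/-- off-diagonal regime estimate
`Σ_{|n|_∞ ≥ L, |n'|_∞ ≥ L, |n-n'|_∞ ≥ L/R} |n|^{-2d}|n'|^{-2d}(1+|n-n'|)^{-β}
  ≤ C R^β L^{-2d-β}`. -/
theorem offdiagonal_regime_estimate (d : ℕ) (hd : 1 ≤ d) (β : ℝ) (hβ : 0 < β) :
    ∃ C : ℝ, 0 < C ∧ ∀ L R : ℝ, 1 ≤ L → 0 < R →
      Summable (fun p : {p : (Fin d → ℤ) × (Fin d → ℤ) //
          L ≤ zSupNorm p.1 ∧ L ≤ zSupNorm p.2 ∧ L / R ≤ zSupNorm (p.1 - p.2)} =>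
        zEucNorm p.1.1 ^ (-(2 * (d : ℝ))) * zEucNorm p.1.2 ^ (-(2 * (d : ℝ))) *
          (1 + zEucNorm (p.1.1 - p.1.2)) ^ (-β)) ∧
      (∑' p : {p : (Fin d → ℤ) × (Fin d → ℤ) //
          L ≤ zSupNorm p.1 ∧ L ≤ zSupNorm p.2 ∧ L / R ≤ zSupNorm (p.1 - p.2)},
        zEucNorm p.1.1 ^ (-(2 * (d : ℝ))) * zEucNorm p.1.2 ^ (-(2 * (d : ℝ))) *
          (1 + zEucNorm (p.1.1 - p.1.2)) ^ (-β)) ≤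
        C * R ^ β * L ^ (-(2 * (d : ℝ)) - β) := by
  classical
  refine ⟨(256 : ℝ) ^ d, by positivity, fun L R hL hR => ?_⟩
  have hL0 : (0 : ℝ) < L := lt_of_lt_of_le one_pos hL
  set a : (Fin d → ℤ) → ℝ := fun n => zEucNorm n ^ (-(2 * (d : ℝ))) with ha
  have ha0 : ∀ n, 0 ≤ a n := fun n => Real.rpow_nonneg (zEucNorm_nonneg n) _
  set K : ℝ := R ^ β * L ^ (-β) with hK
  have hK0 : 0 ≤ K := by positivity
  have hpow : L ^ (-(d : ℝ)) * L ^ (-(d : ℝ)) * L ^ (-β) =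
      L ^ (-(2 * (d : ℝ)) - β) := by
    rw [← Real.rpow_add hL0, ← Real.rpow_add hL0]
    congr 1
    ring
  have key : ∀ s : Finset {p : (Fin d → ℤ) × (Fin d → ℤ) //
      L ≤ zSupNorm p.1 ∧ L ≤ zSupNorm p.2 ∧ L / R ≤ zSupNorm (p.1 - p.2)},
      ∑ p ∈ s, (zEucNorm p.1.1 ^ (-(2 * (d : ℝ))) * zEucNorm p.1.2 ^ (-(2 * (d : ℝ))) *
          (1 + zEucNorm (p.1.1 - p.1.2)) ^ (-β)) ≤
        (256 : ℝ) ^ d * R ^ β * L ^ (-(2 * (d : ℝ)) - β) := by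
    intro s
    have hpt : ∀ p ∈ s, zEucNorm (↑p : (Fin d → ℤ) × (Fin d → ℤ)).1 ^ (-(2 * (d : ℝ))) *
        zEucNorm (↑p : (Fin d → ℤ) × (Fin d → ℤ)).2 ^ (-(2 * (d : ℝ))) *
        (1 + zEucNorm ((↑p : (Fin d → ℤ) × (Fin d → ℤ)).1 -
          (↑p : (Fin d → ℤ) × (Fin d → ℤ)).2)) ^ (-β) ≤
        (a (↑p : (Fin d → ℤ) × (Fin d → ℤ)).1 *
          a (↑p : (Fin d → ℤ) × (Fin d → ℤ)).2) * K := by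
      intro p _
      obtain ⟨q, hq1, hq2, hq3⟩ := p
      have h1 : L / R ≤ 1 + zEucNorm (q.1 - q.2) := by
        refine le_trans hq3 (le_trans (zSupNorm_le_zEucNorm hd _) ?_)
        linarith [zEucNorm_nonneg (q.1 - q.2)]
      have hLR : 0 < L / R := div_pos hL0 hR
      have h2 : (1 + zEucNorm (q.1 - q.2)) ^ (-β) ≤ (L / R) ^ (-β) :=
        Real.rpow_le_rpow_of_nonpos hLR h1 (neg_nonpos.mpr hβ.le)
      have h3 : (L / R) ^ (-β) = K := by
        rw [hK, Real.rpow_neg (div_nonneg hL0.le hR.le), Real.div_rpow hL0.le hR.le,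
          inv_div, Real.rpow_neg hL0.le, div_eq_mul_inv]
      have h4 : 0 ≤ a q.1 * a q.2 := mul_nonneg (ha0 _) (ha0 _)
      calc zEucNorm q.1 ^ (-(2 * (d : ℝ))) * zEucNorm q.2 ^ (-(2 * (d : ℝ))) *
            (1 + zEucNorm (q.1 - q.2)) ^ (-β)
          = (a q.1 * a q.2) * (1 + zEucNorm (q.1 - q.2)) ^ (-β) := by rw [ha]
        _ ≤ (a q.1 * a q.2) * (L / R) ^ (-β) :=
            mul_le_mul_of_nonneg_left h2 h4
        _ = (a q.1 * a q.2) * K := by rw [h3]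
    set t1 := s.image (fun p => (Subtype.val p).1) with ht1
    set t2 := s.image (fun p => (Subtype.val p).2) with ht2
    have hmem1 : ∀ n ∈ t1, L ≤ zSupNorm n := by
      intro n hn
      obtain ⟨p, _, rfl⟩ := Finset.mem_image.mp hn
      exact p.property.1
    have hmem2 : ∀ n ∈ t2, L ≤ zSupNorm n := by
      intro n hn
      obtain ⟨p, _, rfl⟩ := Finset.mem_image.mp hn
      exact p.property.2.1
    have hAB : ∑ p ∈ s, a (↑p : (Fin d → ℤ) × (Fin d → ℤ)).1 *
        a (↑p : (Fin d → ℤ) × (Fin d → ℤ)).2 ≤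
        ((16 : ℝ) ^ d * L ^ (-(d : ℝ))) * ((16 : ℝ) ^ d * L ^ (-(d : ℝ))) := by
      have h1 : ∑ p ∈ s, a (↑p : (Fin d → ℤ) × (Fin d → ℤ)).1 *
          a (↑p : (Fin d → ℤ) × (Fin d → ℤ)).2 =
          ∑ q ∈ s.image Subtype.val, a q.1 * a q.2 :=
        (Finset.sum_image (f := fun q : (Fin d → ℤ) × (Fin d → ℤ) => a q.1 * a q.2)
          (fun x _ y _ h => Subtype.ext h)).symm
      have h2 : s.image Subtype.val ⊆ t1 ×ˢ t2 := by
        intro q hq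
        obtain ⟨p, hp, rfl⟩ := Finset.mem_image.mp hq
        exact Finset.mem_product.mpr
          ⟨Finset.mem_image_of_mem _ hp, Finset.mem_image_of_mem _ hp⟩
      calc ∑ p ∈ s, a (↑p : (Fin d → ℤ) × (Fin d → ℤ)).1 *
            a (↑p : (Fin d → ℤ) × (Fin d → ℤ)).2
          = ∑ q ∈ s.image Subtype.val, a q.1 * a q.2 := h1
        _ ≤ ∑ q ∈ t1 ×ˢ t2, a q.1 * a q.2 :=
            Finset.sum_le_sum_of_subset_of_nonneg h2
              (fun q _ _ => mul_nonneg (ha0 _) (ha0 _))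
        _ = (∑ n ∈ t1, a n) * (∑ n ∈ t2, a n) := by
            rw [Finset.sum_product, ← Finset.sum_mul_sum]
        _ ≤ ((16 : ℝ) ^ d * L ^ (-(d : ℝ))) * ((16 : ℝ) ^ d * L ^ (-(d : ℝ))) := by
            apply mul_le_mul (sum_finset_le hd L hL t1 hmem1)
              (sum_finset_le hd L hL t2 hmem2)
              (Finset.sum_nonneg fun n _ => ha0 n) (by positivity)
    calc ∑ p ∈ s, (zEucNorm (↑p : (Fin d → ℤ) × (Fin d → ℤ)).1 ^ (-(2 * (d : ℝ))) *
          zEucNorm (↑p : (Fin d → ℤ) × (Fin d → ℤ)).2 ^ (-(2 * (d : ℝ))) *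
          (1 + zEucNorm ((↑p : (Fin d → ℤ) × (Fin d → ℤ)).1 -
            (↑p : (Fin d → ℤ) × (Fin d → ℤ)).2)) ^ (-β))
        ≤ ∑ p ∈ s, (a (↑p : (Fin d → ℤ) × (Fin d → ℤ)).1 *
            a (↑p : (Fin d → ℤ) × (Fin d → ℤ)).2) * K :=
          Finset.sum_le_sum hpt
      _ = (∑ p ∈ s, a (↑p : (Fin d → ℤ) × (Fin d → ℤ)).1 *
            a (↑p : (Fin d → ℤ) × (Fin d → ℤ)).2) * K := by
          rw [← Finset.sum_mul]
      _ ≤ (((16 : ℝ) ^ d * L ^ (-(d : ℝ))) * ((16 : ℝ) ^ d * L ^ (-(d : ℝ)))) * K :=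
          mul_le_mul_of_nonneg_right hAB hK0
      _ = ((16 : ℝ) ^ d * (16 : ℝ) ^ d) * R ^ β *
            (L ^ (-(d : ℝ)) * L ^ (-(d : ℝ)) * L ^ (-β)) := by
          rw [hK]; ring
      _ = (256 : ℝ) ^ d * R ^ β * L ^ (-(2 * (d : ℝ)) - β) := by
          rw [hpow, ← mul_pow]
          norm_num
  have hnonneg : ∀ p : {p : (Fin d → ℤ) × (Fin d → ℤ) //
      L ≤ zSupNorm p.1 ∧ L ≤ zSupNorm p.2 ∧ L / R ≤ zSupNorm (p.1 - p.2)},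
      0 ≤ zEucNorm p.1.1 ^ (-(2 * (d : ℝ))) * zEucNorm p.1.2 ^ (-(2 * (d : ℝ))) *
        (1 + zEucNorm (p.1.1 - p.1.2)) ^ (-β) := by
    intro p
    have h1 := zEucNorm_nonneg p.1.1
    have h2 := zEucNorm_nonneg p.1.2
    have h3 := zEucNorm_nonneg (p.1.1 - p.1.2)
    positivity
  have hsum := summable_of_sum_le hnonneg key
  exact ⟨hsum, Summable.tsum_le_of_sum_le hsum key⟩
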